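/- The number of isomorphism classes of filtered λ-ring structures R on ℤ[x]/(x³) such that ψ_p^R(x) ≡ p^r x (mod x²) for all primes p is exactly 1 when r = 1, exactly 3 when r = 2, and exactly 60 when r = 4. (In particular, there are in total 64 isomorphism classes of filtered λ-ring structures on ℤ[x]/(x³) with ψ_p(x) ≡ p^r x (mod x²) for all primes p for some r ∈ {1, 2, 4}.) -/

import Mathlib

/-!
A structure with `ψ_p(x) ≡ p^r x (mod x²)` is given by integers `c_p` with
`ψ_p(x) = p^r x + c_p x²`. Commutation of `ψ_p` with `ψ_2` forces
`(2^{2r} - 2^r) c_p = c_2 (p^{2r} - p^r)`, and `ψ_2(x) ≡ x² (mod 2)` forces `c_2` odd. Conversely,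
for `r ∈ {1, 2, 4}` the number `2^{2r} - 2^r ∈ {2, 12, 240}` divides `(p^{2r} - p^r) / p` for every
odd `p`, so every odd `c_2` occurs. The filtration-preserving automorphisms are `x ↦ ±x + e x²`,
and they change `c_2` exactly into `±c_2` modulo `2^{2r} - 2^r`. Hence the isomorphism classes are
the odd residues modulo `2`, `12`, `240` up to sign: `1`, `3` and `60` of them.
-/

open Polynomial

noncomputable section

/-- The truncated polynomial ring `ℤ[x]/(xⁿ)`. -/
abbrev TP (n : ℕ) : Type := Polynomial ℤ ⧸ Ideal.span {(X : Polynomial ℤ) ^ n}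

/-- The class of `x` in `ℤ[x]/(xⁿ)`. -/
def xx (n : ℕ) : TP n := Ideal.Quotient.mk _ (X : Polynomial ℤ)

/-- A filtered λ-ring structure on `ℤ[x]/(xⁿ)`, presented (via Wilkerson's theorem) as a
family of Adams operations `ψ p`, indexed by the primes `p`: each `ψ p` is a ring
endomorphism preserving the filtration ideal `(x)`, they pairwise commute, and
`ψ p r ≡ r ^ p (mod p)`. -/
structure AdamsFamily (n : ℕ) : Type where
  ψ : Nat.Primes → (TP n →+* TP n)
  maps_ideal : ∀ (p : Nat.Primes), ∀ a ∈ Ideal.span {xx n}, ψ p a ∈ Ideal.span {xx n}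
  comm : ∀ p q : Nat.Primes, (ψ p).comp (ψ q) = (ψ q).comp (ψ p)
  frob : ∀ (p : Nat.Primes) (a : TP n),
    ψ p a - a ^ (p : ℕ) ∈ Ideal.span {((p : ℕ) : TP n)}

/-- Isomorphism of filtered λ-ring structures on `ℤ[x]/(xⁿ)`: a filtration-preserving ring
automorphism intertwining the Adams operations. -/
def AdamsIso {n : ℕ} (R S : AdamsFamily n) : Prop :=
  ∃ σ : TP n ≃+* TP n,
    (Ideal.span {xx n}).map σ.toRingHom = Ideal.span {xx n} ∧
    ∀ p : Nat.Primes, σ.toRingHom.comp (R.ψ p) = (S.ψ p).comp σ.toRingHom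

/-- The prime 2 as an element of `Nat.Primes`. -/
def P2 : Nat.Primes := ⟨2, Nat.prime_two⟩

/-- The prime 3 as an element of `Nat.Primes`. -/
def P3 : Nat.Primes := ⟨3, Nat.prime_three⟩

/-- The number of isomorphism classes of filtered λ-ring structures on `ℤ[x]/(x³)` whose
Adams operations satisfy `ψ p x ≡ p^r x (mod x²)` for all primes `p`. -/
def classCount (r : ℕ) : ℕ :=
  Nat.card (Quot (fun (R S : {R : AdamsFamily 3 //
      ∀ p : Nat.Primes,
        R.ψ p (xx 3) - ((p : ℕ) : TP 3) ^ r * xx 3 ∈ Ideal.span {xx 3 ^ 2}}) =>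
      AdamsIso R.1 S.1))


namespace TP

variable {n : ℕ}

theorem xx_pow_self : xx n ^ n = 0 := by
  rw [xx, ← map_pow, Ideal.Quotient.eq_zero_iff_mem]
  exact Ideal.subset_span rfl

theorem ringHom_ext {S : Type*} [Semiring S] {f g : TP n →+* S} (h : f (xx n) = g (xx n)) :
    f = g :=
  Ideal.Quotient.ringHom_ext (Polynomial.ringHom_ext' (RingHom.ext_int _ _) h)

def lift {S : Type*} [CommRing S] (y : S) (hy : y ^ n = 0) : TP n →+* S :=
  AdjoinRoot.lift (Int.castRingHom S) y (by simpa using hy)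

theorem lift_xx {S : Type*} [CommRing S] (y : S) (hy : y ^ n = 0) : lift y hy (xx n) = y :=
  AdjoinRoot.lift_root _

/-- Frobenius congruences for all elements follow from the one for `x`: both sides are ring
homomorphisms into `TP n ⧸ (p)`, which has characteristic `p` unless it is zero. -/
theorem sub_pow_mem_span_of_xx {p : ℕ} [Fact p.Prime] (ψ : TP n →+* TP n)
    (h : ψ (xx n) - xx n ^ p ∈ Ideal.span {(p : TP n)}) (a : TP n) :
    ψ a - a ^ p ∈ Ideal.span {(p : TP n)} := by
  by_cases hu : IsUnit (p : TP n)
  · simp [Ideal.span_singleton_eq_top.mpr hu]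
  have := CharP.quotient (TP n) p hu
  set I := Ideal.span {(p : TP n)}
  have hψ : (Ideal.Quotient.mk I).comp ψ = (frobenius (TP n ⧸ I) p).comp (Ideal.Quotient.mk I) :=
    ringHom_ext (by simpa [frobenius_def, ← map_pow, Ideal.Quotient.mk_eq_mk_iff_sub_mem] using h)
  simpa [frobenius_def, ← map_pow, Ideal.Quotient.mk_eq_mk_iff_sub_mem] using
    RingHom.congr_fun hψ a

end TP

namespace TP3

def ofCoeffs (a b c : ℤ) : TP 3 := a + b * xx 3 + c * xx 3 ^ 2

theorem ofCoeffs_eq_mk (a b c : ℤ) :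
    ofCoeffs a b c = Ideal.Quotient.mk _ (C a + C b * X + C c * X ^ 2) := by
  simp [ofCoeffs, xx]

theorem ofCoeffs_inj {a b c a' b' c' : ℤ} :
    ofCoeffs a b c = ofCoeffs a' b' c' ↔ a = a' ∧ b = b' ∧ c = c' := by
  refine ⟨fun h => ?_, by rintro ⟨rfl, rfl, rfl⟩; rfl⟩
  rw [ofCoeffs_eq_mk, ofCoeffs_eq_mk, Ideal.Quotient.eq, Ideal.mem_span_singleton,
    X_pow_dvd_iff] at h
  have h0 := h 0 (by norm_num)
  have h1 := h 1 (by norm_num)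
  have h2 := h 2 (by norm_num)
  simp only [coeff_sub, coeff_add, coeff_C_mul, coeff_X_pow, coeff_C, coeff_X] at h0 h1 h2
  norm_num [sub_eq_zero] at h0 h1 h2
  exact ⟨h0, h1, h2⟩

theorem exists_ofCoeffs (u : TP 3) : ∃ a b c : ℤ, u = ofCoeffs a b c := by
  obtain ⟨q, rfl⟩ := Ideal.Quotient.mk_surjective u
  refine ⟨q.coeff 0, q.coeff 1, q.coeff 2, ?_⟩
  rw [ofCoeffs_eq_mk, Ideal.Quotient.eq, Ideal.mem_span_singleton, X_pow_dvd_iff]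
  intro d hd
  interval_cases d <;>
    simp only [coeff_sub, coeff_add, coeff_C_mul, coeff_X_pow, coeff_C, coeff_X] <;> norm_num

theorem ofCoeffs_zero : ofCoeffs 0 0 0 = 0 := by simp [ofCoeffs]

theorem intCast_eq_ofCoeffs (a : ℤ) : (a : TP 3) = ofCoeffs a 0 0 := by simp [ofCoeffs]

theorem xx_eq_ofCoeffs : xx 3 = ofCoeffs 0 1 0 := by simp [ofCoeffs]

theorem xx_sq_eq_ofCoeffs : xx 3 ^ 2 = ofCoeffs 0 0 1 := by simp [ofCoeffs]

theorem natCast_pow_mul_xx (m r : ℕ) : (m : TP 3) ^ r * xx 3 = ofCoeffs 0 ((m : ℤ) ^ r) 0 := by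
  simp [ofCoeffs]

theorem ofCoeffs_sub (a b c a' b' c' : ℤ) :
    ofCoeffs a b c - ofCoeffs a' b' c' = ofCoeffs (a - a') (b - b') (c - c') := by
  simp only [ofCoeffs]; push_cast; ring

theorem ofCoeffs_mul (a b c a' b' c' : ℤ) :
    ofCoeffs a b c * ofCoeffs a' b' c' =
      ofCoeffs (a * a') (a * b' + b * a') (a * c' + b * b' + c * a') := by
  have h3 : xx 3 ^ 3 = 0 := TP.xx_pow_self
  simp only [ofCoeffs]; push_cast
  linear_combination ((b : TP 3) * c' + c * b' + c * c' * xx 3) * h3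

theorem ofCoeffs_zero_pow_three (b c : ℤ) : ofCoeffs 0 b c ^ 3 = 0 := by
  rw [pow_succ, pow_two, ofCoeffs_mul, ofCoeffs_mul]
  simpa using ofCoeffs_zero

theorem ofCoeffs_mem_span_natCast {m : ℕ} {a b c : ℤ} :
    ofCoeffs a b c ∈ Ideal.span {(m : TP 3)} ↔ (m : ℤ) ∣ a ∧ (m : ℤ) ∣ b ∧ (m : ℤ) ∣ c := by
  rw [Ideal.mem_span_singleton, ← Int.cast_natCast, intCast_eq_ofCoeffs]
  constructor
  · rintro ⟨t, ht⟩
    obtain ⟨a', b', c', rfl⟩ := exists_ofCoeffs t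
    rw [ofCoeffs_mul, ofCoeffs_inj] at ht
    simp only [ht, zero_mul, add_zero]
    exact ⟨dvd_mul_right _ _, dvd_mul_right _ _, dvd_mul_right _ _⟩
  · rintro ⟨⟨a', rfl⟩, ⟨b', rfl⟩, ⟨c', rfl⟩⟩
    exact ⟨ofCoeffs a' b' c', by rw [ofCoeffs_mul]; simp⟩

theorem ofCoeffs_mem_span_xx {a b c : ℤ} : ofCoeffs a b c ∈ Ideal.span {xx 3} ↔ a = 0 := by
  rw [Ideal.mem_span_singleton, xx_eq_ofCoeffs]
  constructor
  · rintro ⟨t, ht⟩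
    obtain ⟨a', b', c', rfl⟩ := exists_ofCoeffs t
    rw [ofCoeffs_mul, ofCoeffs_inj] at ht
    simp [ht]
  · rintro rfl
    exact ⟨ofCoeffs b c 0, by rw [ofCoeffs_mul]; simp⟩

theorem ofCoeffs_mem_span_xx_sq {a b c : ℤ} :
    ofCoeffs a b c ∈ Ideal.span {xx 3 ^ 2} ↔ a = 0 ∧ b = 0 := by
  rw [Ideal.mem_span_singleton, xx_sq_eq_ofCoeffs]
  constructor
  · rintro ⟨t, ht⟩
    obtain ⟨a', b', c', rfl⟩ := exists_ofCoeffs t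
    rw [ofCoeffs_mul, ofCoeffs_inj] at ht
    simp [ht]
  · rintro ⟨rfl, rfl⟩
    exact ⟨ofCoeffs c 0 0, by rw [ofCoeffs_mul]; simp⟩

def subst (β γ : ℤ) : TP 3 →+* TP 3 := TP.lift (ofCoeffs 0 β γ) (ofCoeffs_zero_pow_three β γ)

theorem subst_xx (β γ : ℤ) : subst β γ (xx 3) = ofCoeffs 0 β γ := TP.lift_xx _ _

theorem eq_subst {ψ : TP 3 →+* TP 3} {β γ : ℤ} (h : ψ (xx 3) = ofCoeffs 0 β γ) :
    ψ = subst β γ :=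
  TP.ringHom_ext (h.trans (subst_xx β γ).symm)

theorem exists_eq_subst {ψ : TP 3 →+* TP 3} (h : ψ (xx 3) ∈ Ideal.span {xx 3}) :
    ∃ β γ : ℤ, ψ = subst β γ := by
  obtain ⟨a, b, c, hψ⟩ := exists_ofCoeffs (ψ (xx 3))
  rw [hψ, ofCoeffs_mem_span_xx] at h
  exact ⟨b, c, eq_subst (h ▸ hψ)⟩

theorem subst_ofCoeffs (β γ a b c : ℤ) :
    subst β γ (ofCoeffs a b c) = ofCoeffs a (b * β) (b * γ + c * β ^ 2) := by
  have h : ofCoeffs a b c = (a : TP 3) + (b : TP 3) * xx 3 + (c : TP 3) * xx 3 ^ 2 := rfl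
  rw [h, map_add, map_add, map_mul, map_mul, map_pow, map_intCast, map_intCast, map_intCast,
    subst_xx, intCast_eq_ofCoeffs, intCast_eq_ofCoeffs, intCast_eq_ofCoeffs, pow_two,
    ofCoeffs_mul, ofCoeffs_mul, ofCoeffs_mul]
  simp only [ofCoeffs]; push_cast; ring

theorem subst_inj {β γ β' γ' : ℤ} : subst β γ = subst β' γ' ↔ β = β' ∧ γ = γ' := by
  refine ⟨fun h => ?_, by rintro ⟨rfl, rfl⟩; rfl⟩
  simpa [subst_xx, ofCoeffs_inj] using RingHom.congr_fun h (xx 3)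

theorem subst_one_zero : subst 1 0 = RingHom.id (TP 3) :=
  (eq_subst xx_eq_ofCoeffs).symm

theorem subst_comp_subst (β γ β' γ' : ℤ) :
    (subst β γ).comp (subst β' γ') = subst (β' * β) (β' * γ + γ' * β ^ 2) :=
  eq_subst (by rw [RingHom.comp_apply, subst_xx, subst_ofCoeffs])

theorem subst_comp_eq_comp_subst_iff {α ε β γ γ' : ℤ} :
    (subst α ε).comp (subst β γ) = (subst β γ').comp (subst α ε) ↔
      β * ε + γ * α ^ 2 = α * γ' + ε * β ^ 2 := by
  rw [subst_comp_subst, subst_comp_subst, subst_inj, mul_comm β α]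
  simp

def substEquiv (ε γ : ℤ) (hε : ε * ε = 1) : TP 3 ≃+* TP 3 :=
  RingEquiv.ofRingHom (subst ε γ) (subst ε (-(ε * γ)))
    (by rw [subst_comp_subst, ← subst_one_zero, subst_inj]
        exact ⟨by linear_combination hε, by linear_combination (-ε * γ) * hε⟩)
    (by rw [subst_comp_subst, ← subst_one_zero, subst_inj]
        exact ⟨by linear_combination hε, by ring⟩)

theorem map_subst_span_xx {ε γ : ℤ} (hε : ε * ε = 1) :
    (Ideal.span {xx 3}).map (subst ε γ) = Ideal.span {xx 3} := by
  rw [Ideal.map_span, Set.image_singleton, subst_xx]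
  refine le_antisymm ?_ ?_ <;> rw [Ideal.span_singleton_le_span_singleton]
  · exact ⟨ofCoeffs ε γ 0, by rw [xx_eq_ofCoeffs, ofCoeffs_mul]; simp⟩
  · exact ⟨ofCoeffs ε (-γ) 0, by
      rw [xx_eq_ofCoeffs, ofCoeffs_mul, ofCoeffs_inj]
      exact ⟨by ring, by linear_combination -hε, by ring⟩⟩

end TP3

def weight (r : ℕ) (n : ℤ) : ℤ := n ^ r * (n ^ r - 1)

theorem weight_two_ne_zero {r : ℕ} (hr : 0 < r) : weight r 2 ≠ 0 :=
  mul_ne_zero (by positivity) (sub_ne_zero.mpr (one_lt_pow₀ (by norm_num) hr.ne').ne')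

theorem even_weight_two {r : ℕ} (hr : 0 < r) : Even (weight r 2) := by
  obtain ⟨k, rfl⟩ := Nat.exists_eq_add_of_lt hr
  exact ⟨2 ^ k * (2 ^ (k + 1) - 1), by rw [weight]; ring⟩

set_option maxRecDepth 4000 in
theorem weight_two_mul_dvd_weight {r : ℕ} (hr : r = 1 ∨ r = 2 ∨ r = 4) {n : ℤ} (hn : Odd n) :
    weight r 2 * n ∣ weight r n := by
  obtain ⟨k, rfl⟩ := hn
  rcases hr with rfl | rfl | rfl
  · exact ⟨k, by rw [weight, weight]; ring⟩
  · obtain ⟨t, ht⟩ : ((12 : ℕ) : ℤ) ∣ (2 * k + 1) * ((2 * k + 1) ^ 2 - 1) :=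
      (ZMod.intCast_zmod_eq_zero_iff_dvd _ 12).mp <| by
        push_cast
        exact (by decide : ∀ m : ZMod 12, (2 * m + 1) * ((2 * m + 1) ^ 2 - 1) = 0) k
    exact ⟨t, by rw [weight, weight]; linear_combination (2 * k + 1) * ht⟩
  · obtain ⟨t, ht⟩ : ((240 : ℕ) : ℤ) ∣ (2 * k + 1) ^ 3 * ((2 * k + 1) ^ 4 - 1) :=
      (ZMod.intCast_zmod_eq_zero_iff_dvd _ 240).mp <| by
        push_cast
        exact (by decide : ∀ m : ZMod 240, (2 * m + 1) ^ 3 * ((2 * m + 1) ^ 4 - 1) = 0) k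
    exact ⟨t, by rw [weight, weight]; linear_combination (2 * k + 1) * ht⟩

theorem coe_P2 : (P2 : ℕ) = 2 := rfl

theorem intCast_P2 : ((P2 : ℕ) : ℤ) = 2 := rfl

theorem odd_of_ne_P2 {p : Nat.Primes} (hp : p ≠ P2) : Odd (p : ℤ) :=
  (Int.odd_coe_nat _).mpr (p.2.odd_of_ne_two fun h => hp (Subtype.ext h))

def signSetoid (n : ℕ) : Setoid {z : ZMod n // Odd z.val} where
  r z w := z.1 = w.1 ∨ z.1 = -w.1
  iseqv :=
    { refl := fun _ => .inl rfl
      symm := fun h => h.imp Eq.symm fun h => by rw [h, neg_neg]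
      trans := by
        rintro _ _ _ (h | h) (h' | h')
        exacts [.inl (h.trans h'), .inr (by rw [h, h']), .inr (by rw [h, h']),
          .inl (by rw [h, h', neg_neg])] }

instance (n : ℕ) : DecidableRel (signSetoid n).r := fun _ _ => instDecidableOr

theorem odd_val_intCast {n : ℕ} [NeZero n] (hn : Even n) {k : ℤ} (hk : Odd k) :
    Odd (k : ZMod n).val := by
  rw [← Int.odd_coe_nat, ZMod.val_intCast, Int.odd_iff,
    Int.emod_emod_of_dvd _ (even_iff_two_dvd.mp ((Int.even_coe_nat n).mpr hn))]
  exact Int.odd_iff.mp hk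

theorem intCast_eq_or_eq_neg_iff {n : ℕ} {a b : ℤ} :
    ((a : ZMod n) = b ∨ (a : ZMod n) = -b) ↔ ∃ ε : ℤ, IsUnit ε ∧ (n : ℤ) ∣ b - ε * a := by
  simp_rw [← ZMod.intCast_zmod_eq_zero_iff_dvd]
  push_cast
  constructor
  · rintro (h | h)
    exacts [⟨1, isUnit_one, by rw [h]; ring⟩, ⟨-1, isUnit_one.neg, by push_cast; rw [h]; ring⟩]
  · rintro ⟨ε, hε, h⟩
    rcases Int.isUnit_iff.mp hε with rfl | rfl
    · left; linear_combination -h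
    · right; push_cast at h; linear_combination h

open TP3

abbrev AdamsFamilyOfWeight (r : ℕ) : Type :=
  {R : AdamsFamily 3 // ∀ p : Nat.Primes,
    R.ψ p (xx 3) - ((p : ℕ) : TP 3) ^ r * xx 3 ∈ Ideal.span {xx 3 ^ 2}}

namespace AdamsFamilyOfWeight

variable {r : ℕ}

theorem exists_ψ_eq_subst (R : AdamsFamilyOfWeight r) (p : Nat.Primes) :
    ∃ c : ℤ, R.1.ψ p = subst ((p : ℤ) ^ r) c := by
  obtain ⟨a, b, c, hψ⟩ := exists_ofCoeffs (R.1.ψ p (xx 3))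
  have h := R.2 p
  rw [hψ, natCast_pow_mul_xx, ofCoeffs_sub, ofCoeffs_mem_span_xx_sq, sub_zero, sub_eq_zero] at h
  rw [h.1, h.2] at hψ
  exact ⟨c, eq_subst hψ⟩

def coeff (R : AdamsFamilyOfWeight r) (p : Nat.Primes) : ℤ := (R.exists_ψ_eq_subst p).choose

theorem ψ_eq_subst (R : AdamsFamilyOfWeight r) (p : Nat.Primes) :
    R.1.ψ p = subst ((p : ℤ) ^ r) (R.coeff p) :=
  (R.exists_ψ_eq_subst p).choose_spec

def invariant (R : AdamsFamilyOfWeight r) : ℤ := R.coeff P2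

theorem coeff_mul_weight (R : AdamsFamilyOfWeight r) (p q : Nat.Primes) :
    R.coeff p * weight r q = R.coeff q * weight r p := by
  have h := R.1.comm p q
  rw [R.ψ_eq_subst, R.ψ_eq_subst, subst_comp_eq_comp_subst_iff] at h
  rw [weight, weight]
  linear_combination -h

theorem weight_two_mul_coeff (R : AdamsFamilyOfWeight r) (p : Nat.Primes) :
    weight r 2 * R.coeff p = R.invariant * weight r p := by
  have h := R.coeff_mul_weight p P2
  rw [intCast_P2] at h
  rw [invariant]
  linear_combination h

theorem odd_invariant (R : AdamsFamilyOfWeight r) : Odd R.invariant := by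
  have h := R.1.frob P2 (xx 3)
  rw [R.ψ_eq_subst, subst_xx, coe_P2, xx_sq_eq_ofCoeffs, ofCoeffs_sub,
    ofCoeffs_mem_span_natCast] at h
  obtain ⟨t, ht⟩ := h.2.2
  exact ⟨t, by rw [invariant]; push_cast at ht; linarith⟩

def ofCoeff (hr : 0 < r) (c : Nat.Primes → ℤ)
    (hcomm : ∀ p q : Nat.Primes, c p * weight r q = c q * weight r p) (hc2 : Odd (c P2))
    (hc : ∀ p, p ≠ P2 → (p : ℤ) ∣ c p) : AdamsFamilyOfWeight r where
  val :=
    { ψ := fun p => subst ((p : ℤ) ^ r) (c p)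
      maps_ideal := fun p a ha => by
        obtain ⟨a, b, c', rfl⟩ := exists_ofCoeffs a
        rw [ofCoeffs_mem_span_xx] at ha
        rw [subst_ofCoeffs, ofCoeffs_mem_span_xx, ha]
      comm := fun p q => by
        rw [subst_comp_eq_comp_subst_iff]
        linear_combination (norm := (simp only [weight]; ring)) -hcomm p q
      frob := fun p => by
        have := Fact.mk p.2
        refine TP.sub_pow_mem_span_of_xx _ ?_
        rw [subst_xx]
        rcases eq_or_ne p P2 with rfl | hp
        · obtain ⟨k, hk⟩ := hc2
          rw [coe_P2, xx_sq_eq_ofCoeffs, ofCoeffs_sub, ofCoeffs_mem_span_natCast]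
          exact ⟨dvd_zero _, dvd_pow_self _ hr.ne', ⟨k, by push_cast; linarith⟩⟩
        · have hp3 : 3 ≤ (p : ℕ) := by
            obtain ⟨k, hk⟩ := odd_of_ne_P2 hp
            have := p.2.two_le
            omega
          rw [pow_eq_zero_of_le hp3 TP.xx_pow_self, sub_zero, ofCoeffs_mem_span_natCast]
          exact ⟨dvd_zero _, dvd_pow_self _ hr.ne', hc p hp⟩ }
  property p := by
    rw [subst_xx, natCast_pow_mul_xx, ofCoeffs_sub, ofCoeffs_mem_span_xx_sq]
    simp

theorem coeff_ofCoeff (hr : 0 < r) (c : Nat.Primes → ℤ) (hcomm hc2 hc) (p : Nat.Primes) :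
    (ofCoeff hr c hcomm hc2 hc).coeff p = c p :=
  ((subst_inj.mp ((ofCoeff hr c hcomm hc2 hc).ψ_eq_subst p)).2).symm

theorem weight_two_dvd_weight (hdiv : ∀ n : ℤ, Odd n → weight r 2 * n ∣ weight r n)
    (p : Nat.Primes) : weight r 2 ∣ weight r p := by
  rcases eq_or_ne p P2 with rfl | hp
  · rfl
  · exact dvd_of_mul_right_dvd (hdiv p (odd_of_ne_P2 hp))

def ofInvariant (hr : 0 < r) (hdiv : ∀ n : ℤ, Odd n → weight r 2 * n ∣ weight r n) (k : ℤ)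
    (hk : Odd k) : AdamsFamilyOfWeight r :=
  ofCoeff hr (fun p => k * (weight r p / weight r 2))
    (fun p q : Nat.Primes => mul_left_cancel₀ (weight_two_ne_zero hr) <| by
      linear_combination k * weight r q * Int.mul_ediv_cancel' (weight_two_dvd_weight hdiv p) -
        k * weight r p * Int.mul_ediv_cancel' (weight_two_dvd_weight hdiv q))
    (by simpa [intCast_P2, Int.ediv_self (weight_two_ne_zero hr)] using hk)
    (fun p hp => (Int.dvd_div_of_mul_dvd (hdiv p (odd_of_ne_P2 hp))).mul_left k)

theorem invariant_ofInvariant (hr : 0 < r) (hdiv : ∀ n : ℤ, Odd n → weight r 2 * n ∣ weight r n)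
    (k : ℤ) (hk : Odd k) : (ofInvariant hr hdiv k hk).invariant = k := by
  rw [invariant, ofInvariant, coeff_ofCoeff, intCast_P2, Int.ediv_self (weight_two_ne_zero hr),
    mul_one]

theorem adamsIso_of_dvd (hr : 0 < r) {R S : AdamsFamilyOfWeight r} {ε : ℤ} (hε : IsUnit ε)
    (h : weight r 2 ∣ S.invariant - ε * R.invariant) : AdamsIso R.1 S.1 := by
  obtain ⟨t, ht⟩ := h
  have hεε := Int.isUnit_mul_self hε
  refine ⟨substEquiv ε (-(ε * t)) hεε, map_subst_span_xx hεε, fun p => ?_⟩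
  change (subst ε _).comp _ = (S.1.ψ p).comp (subst ε _)
  rw [R.ψ_eq_subst, S.ψ_eq_subst, subst_comp_eq_comp_subst_iff]
  have hR := R.weight_two_mul_coeff p
  have hS := S.weight_two_mul_coeff p
  refine mul_left_cancel₀ (weight_two_ne_zero hr) ?_
  unfold weight at hR hS ht ⊢
  linear_combination ε ^ 2 * hR - ε * hS - ε * ((p : ℤ) ^ r * ((p : ℤ) ^ r - 1)) * ht

theorem exists_dvd_of_adamsIso {R S : AdamsFamilyOfWeight r} (h : AdamsIso R.1 S.1) :
    ∃ ε : ℤ, IsUnit ε ∧ weight r 2 ∣ S.invariant - ε * R.invariant := by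
  obtain ⟨σ, hmap, hσ⟩ := h
  obtain ⟨b, e, hb⟩ : ∃ b e : ℤ, σ.toRingHom = subst b e := exists_eq_subst <| by
    rw [← hmap]; exact Ideal.mem_map_of_mem _ (Ideal.mem_span_singleton_self _)
  obtain ⟨b', e', hb'⟩ : ∃ b e : ℤ, σ.symm.toRingHom = subst b e := exists_eq_subst <| by
    have hx : xx 3 ∈ (Ideal.span {xx 3}).map σ.toRingHom := by
      rw [hmap]; exact Ideal.mem_span_singleton_self _
    obtain ⟨u, hu, hσu⟩ := (Ideal.mem_map_iff_of_surjective _ σ.surjective).mp hx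
    have hu' : σ.symm.toRingHom (xx 3) = u := by rw [← hσu]; simp
    rwa [hu']
  have hid := σ.toRingHom_comp_symm_toRingHom
  rw [hb, hb', subst_comp_subst, ← subst_one_zero, subst_inj] at hid
  have hbu : IsUnit b := IsUnit.of_mul_eq_one_right _ hid.1
  have hbb := Int.isUnit_mul_self hbu
  have h2 := hσ P2
  rw [hb, R.ψ_eq_subst, S.ψ_eq_subst, subst_comp_eq_comp_subst_iff, intCast_P2] at h2
  refine ⟨b, hbu, -(b * e), ?_⟩
  rw [invariant, invariant, weight]
  linear_combination -b * h2 + (b * R.coeff P2 - S.coeff P2) * hbb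

theorem adamsIso_iff (hr : 0 < r) {R S : AdamsFamilyOfWeight r} :
    AdamsIso R.1 S.1 ↔ ∃ ε : ℤ, IsUnit ε ∧ weight r 2 ∣ S.invariant - ε * R.invariant :=
  ⟨exists_dvd_of_adamsIso, fun ⟨_, hε, h⟩ => adamsIso_of_dvd hr hε h⟩

theorem card_quot_adamsIso (hr : 0 < r) (hdiv : ∀ n : ℤ, Odd n → weight r 2 * n ∣ weight r n) :
    Nat.card (Quot fun R S : AdamsFamilyOfWeight r => AdamsIso R.1 S.1) =
      Nat.card (Quotient (signSetoid (weight r 2).natAbs)) := by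
  have : NeZero (weight r 2).natAbs := ⟨Int.natAbs_ne_zero.mpr (weight_two_ne_zero hr)⟩
  have hev : Even (weight r 2).natAbs := Int.natAbs_even.mpr (even_weight_two hr)
  let f (R : AdamsFamilyOfWeight r) : Quotient (signSetoid (weight r 2).natAbs) :=
    ⟦⟨R.invariant, odd_val_intCast hev R.odd_invariant⟩⟧
  have hf : Function.Surjective f := by
    refine Quotient.ind fun ⟨z, hz⟩ => ?_
    refine ⟨ofInvariant hr hdiv z.val ((Int.odd_coe_nat _).mpr hz),
      congrArg (Quotient.mk _) (Subtype.ext ?_)⟩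
    simp only [invariant_ofInvariant, Int.cast_natCast, ZMod.natCast_zmod_val]
  have hiff (R S : AdamsFamilyOfWeight r) : AdamsIso R.1 S.1 ↔ f R = f S := by
    rw [adamsIso_iff hr, Quotient.eq]
    exact (intCast_eq_or_eq_neg_iff.trans (by simp only [Int.natAbs_dvd])).symm
  exact Nat.card_congr ((Quot.congrRight hiff).trans (Setoid.quotientKerEquivOfSurjective f hf))

end AdamsFamilyOfWeight

theorem classCount_eq {r : ℕ} (hr : r = 1 ∨ r = 2 ∨ r = 4) :
    classCount r = Nat.card (Quotient (signSetoid (weight r 2).natAbs)) :=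
  AdamsFamilyOfWeight.card_quot_adamsIso (by omega) fun _ => weight_two_mul_dvd_weight hr

set_option maxRecDepth 40000 in
theorem stmt9 : classCount 1 = 1 ∧ classCount 2 = 3 ∧ classCount 4 = 60 := by
  refine ⟨?_, ?_, ?_⟩
  · rw [classCount_eq (by norm_num), show (weight 1 2).natAbs = 2 from rfl,
      Nat.card_eq_fintype_card]
    decide
  · rw [classCount_eq (by norm_num), show (weight 2 2).natAbs = 12 from rfl,
      Nat.card_eq_fintype_card]
    decide
  · rw [classCount_eq (by norm_num), show (weight 4 2).natAbs = 240 from rfl,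
      Nat.card_eq_fintype_card]
    decide
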